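/- Let f(x) = ⟨Ax, x⟩ + ⟨a, x⟩ + α and g(x) = ⟨Bx, x⟩ + ⟨b, x⟩ + β with A, B self-adjoint, and let Z be a standard normal random vector in R^n. Then E[|f(Z) − g(Z)|^2] = 2‖A − B‖_HS^2 + (tr A − tr B + α − β)^2 + |a − b|^2. -/

import Mathlib

/-!
Write `f - g` as the polynomial `P = ∑ᵢ Xᵢ Rᵢ + γ` with affine `Rᵢ = ∑ⱼ Mᵢⱼ Xⱼ + cᵢ`,
where `M = A - B`, `c = a - b`, `γ = α - β`. Gaussian integration by parts
`E[Zᵢ F(Z)] = E[∂ᵢF(Z)]` holds for every polynomial `F`, because on monomials it reduces to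
the one-dimensional recursion `E[Z^(k+2)] = (k+1) E[Z^k]`. Applied to
`E[P²] = ∑ᵢ E[Zᵢ Rᵢ P] + γ E[P]` it leaves only `E[P] = tr M + γ` and second moments of affine
forms, `E[(⟨u, Z⟩ + a)(⟨v, Z⟩ + b)] = ⟨u, v⟩ + ab`.
-/

open MeasureTheory ProbabilityTheory

open Real in
lemma hasDerivAt_gaussianPDFReal (x : ℝ) :
    HasDerivAt (gaussianPDFReal 0 1) (-x * gaussianPDFReal 0 1 x) x := by
  have hφ : gaussianPDFReal 0 1 = fun x => (√(2 * π))⁻¹ * rexp (-x ^ 2 / 2) := by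
    ext; simp [gaussianPDFReal]
  have hexp : HasDerivAt (fun x : ℝ => -x ^ 2 / 2) (-x) x :=
    ((hasDerivAt_pow 2 x).fun_neg.div_const 2).congr_deriv (by ring)
  rw [hφ]
  exact (hexp.exp.const_mul _).congr_deriv (by ring)

lemma integrable_pow_gaussianReal (μ : ℝ) (v : NNReal) (k : ℕ) :
    Integrable (fun x => x ^ k) (gaussianReal μ v) := by
  rw [← integrable_norm_iff (by fun_prop)]
  simpa using (memLp_id_gaussianReal (μ := μ) (v := v) k).integrable_norm_pow'

lemma integrable_pow_mul_gaussianPDFReal (k : ℕ) :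
    Integrable (fun x => x ^ k * gaussianPDFReal 0 1 x) := by
  have h := integrable_pow_gaussianReal 0 1 k
  rw [gaussianReal_of_var_ne_zero 0 one_ne_zero,
    integrable_withDensity_iff_integrable_smul' (measurable_gaussianPDF 0 1)
      (Filter.Eventually.of_forall fun _ => gaussianPDF_lt_top)] at h
  simpa [toReal_gaussianPDF, mul_comm] using h

lemma integral_pow_add_two_gaussianReal (k : ℕ) :
    ∫ x, x ^ (k + 2) ∂gaussianReal 0 1 = (k + 1) * ∫ x, x ^ k ∂gaussianReal 0 1 := by
  have ibp := integral_mul_deriv_eq_deriv_mul_of_integrable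
    (u := fun x : ℝ => x ^ (k + 1)) (u' := fun x => (k + 1 : ℝ) * x ^ k)
    (v := gaussianPDFReal 0 1) (v' := fun x => -x * gaussianPDFReal 0 1 x)
    (fun x _ => by simpa using hasDerivAt_pow (k + 1) x)
    (fun x _ => hasDerivAt_gaussianPDFReal x)
    (by simpa [Pi.mul_def, pow_succ, mul_assoc] using
      (integrable_pow_mul_gaussianPDFReal (k + 2)).neg)
    (by simpa [Pi.mul_def, mul_assoc] using
      (integrable_pow_mul_gaussianPDFReal k).const_mul (k + 1 : ℝ))
    (integrable_pow_mul_gaussianPDFReal (k + 1))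
  simp only [integral_gaussianReal_eq_integral_smul one_ne_zero, smul_eq_mul,
    ← integral_const_mul]
  calc ∫ x, gaussianPDFReal 0 1 x * x ^ (k + 2)
      = -∫ x, x ^ (k + 1) * (-x * gaussianPDFReal 0 1 x) := by
        rw [← integral_neg]; congr 1; ext x; ring
    _ = ∫ x, (k + 1) * (gaussianPDFReal 0 1 x * x ^ k) := by
        rw [ibp, neg_neg]; congr 1; ext x; ring

lemma integral_pow_succ_gaussianReal (k : ℕ) :
    ∫ x, x ^ (k + 1) ∂gaussianReal 0 1 = k * ∫ x, x ^ (k - 1) ∂gaussianReal 0 1 := by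
  cases k with
  | zero => simp
  | succ k =>
    rw [integral_pow_add_two_gaussianReal, add_tsub_cancel_right]
    push_cast
    ring

section StdGaussian

variable {ι : Type*} [Fintype ι]

lemma integral_prod_pow_gaussian (k : ι → ℕ) :
    ∫ z, ∏ m, z m ^ k m ∂(Measure.pi fun _ : ι => gaussianReal 0 1)
      = ∏ m, ∫ x, x ^ k m ∂gaussianReal 0 1 :=
  integral_fintype_prod_eq_prod (fun m (x : ℝ) => x ^ k m)

lemma integral_mul_prod_pow_gaussian (s : ι →₀ ℕ) (i : ι) :
    ∫ z, z i * ∏ m, z m ^ s m ∂(Measure.pi fun _ : ι => gaussianReal 0 1)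
      = s i * ∫ z, ∏ m, z m ^ (s - Finsupp.single i 1 : ι →₀ ℕ) m
          ∂(Measure.pi fun _ : ι => gaussianReal 0 1) := by
  classical
  have hsub : ⇑(s - Finsupp.single i 1 : ι →₀ ℕ) = Function.update s i (s i - 1) := by
    ext m
    rcases eq_or_ne m i with rfl | hm <;> simp [*]
  have hprod (f : ι → ℕ → ℝ) (b : ℕ) :
      ∏ m, f m (Function.update s i b m) = f i b * ∏ m ∈ {i}ᶜ, f m (s m) := by
    rw [Fintype.prod_eq_mul_prod_compl i, Function.update_self]
    congr 1
    exact Finset.prod_congr rfl fun m hm => by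
      rw [Function.update_of_ne (by simpa using hm)]
  have hmul (z : ι → ℝ) :
      z i * ∏ m, z m ^ s m = ∏ m, z m ^ Function.update s i (s i + 1) m := by
    rw [hprod (fun m k => z m ^ k), Fintype.prod_eq_mul_prod_compl i, pow_succ', mul_assoc]
  simp_rw [hmul, hsub, integral_prod_pow_gaussian]
  rw [hprod (fun _ k => ∫ x, x ^ k ∂gaussianReal 0 1),
    hprod (fun _ k => ∫ x, x ^ k ∂gaussianReal 0 1), integral_pow_succ_gaussianReal, mul_assoc]

namespace MvPolynomial

lemma integrable_eval_gaussian (P : MvPolynomial ι ℝ) :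
    Integrable (fun z => eval z P) (Measure.pi fun _ : ι => gaussianReal 0 1) := by
  induction P using MvPolynomial.induction_on' with
  | monomial s a =>
    simp only [eval_monomial, Finsupp.prod_fintype _ _ (fun _ => pow_zero _)]
    exact (Integrable.fintype_prod fun m => integrable_pow_gaussianReal 0 1 (s m)).const_mul a
  | add P Q hP hQ => simp only [map_add]; exact hP.add hQ

variable (ι) in
noncomputable def gaussianExpectation : MvPolynomial ι ℝ →ₗ[ℝ] ℝ where
  toFun P := ∫ z, eval z P ∂(Measure.pi fun _ : ι => gaussianReal 0 1)
  map_add' P Q := by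
    simp only [map_add]
    exact integral_add (integrable_eval_gaussian P) (integrable_eval_gaussian Q)
  map_smul' a P := by simp [integral_const_mul]

lemma gaussianExpectation_apply (P : MvPolynomial ι ℝ) :
    gaussianExpectation ι P = ∫ z, eval z P ∂(Measure.pi fun _ : ι => gaussianReal 0 1) := rfl

@[simp]
lemma gaussianExpectation_C (a : ℝ) : gaussianExpectation ι (C a) = a := by
  simp [gaussianExpectation_apply]

@[simp]
lemma gaussianExpectation_one : gaussianExpectation ι 1 = 1 := by
  simpa using gaussianExpectation_C (ι := ι) 1

lemma gaussianExpectation_X_mul (i : ι) (P : MvPolynomial ι ℝ) :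
    gaussianExpectation ι (X i * P) = gaussianExpectation ι (pderiv i P) := by
  induction P using MvPolynomial.induction_on' with
  | monomial s a =>
    simp only [gaussianExpectation_apply, eval_mul, eval_X, pderiv_monomial, eval_monomial,
      Finsupp.prod_fintype _ _ (fun _ => pow_zero _)]
    simp_rw [mul_left_comm _ a, integral_const_mul, integral_mul_prod_pow_gaussian]
    ring
  | add P Q hP hQ => simp only [mul_add, map_add, hP, hQ]

noncomputable def affinePoly (u : ι → ℝ) (a : ℝ) : MvPolynomial ι ℝ :=
  ∑ j, C (u j) * X j + C a

lemma pderiv_affinePoly (u : ι → ℝ) (a : ℝ) (i : ι) :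
    pderiv i (affinePoly u a) = C (u i) := by
  classical
  simp [affinePoly, pderiv_X, Pi.single_apply]

lemma gaussianExpectation_affinePoly_mul (u : ι → ℝ) (a : ℝ) (T : MvPolynomial ι ℝ) :
    gaussianExpectation ι (affinePoly u a * T)
      = ∑ j, u j * gaussianExpectation ι (pderiv j T) + a * gaussianExpectation ι T := by
  simp [affinePoly, add_mul, Finset.sum_mul, gaussianExpectation_X_mul, ← smul_eq_C_mul]

lemma gaussianExpectation_affinePoly (u : ι → ℝ) (a : ℝ) :
    gaussianExpectation ι (affinePoly u a) = a := by
  simpa using gaussianExpectation_affinePoly_mul u a 1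

lemma gaussianExpectation_affinePoly_mul_affinePoly (u v : ι → ℝ) (a b : ℝ) :
    gaussianExpectation ι (affinePoly u a * affinePoly v b) = ∑ j, u j * v j + a * b := by
  simp [gaussianExpectation_affinePoly_mul, pderiv_affinePoly, gaussianExpectation_affinePoly]

noncomputable def quadraticPoly (M : Matrix ι ι ℝ) (c : ι → ℝ) (γ : ℝ) : MvPolynomial ι ℝ :=
  ∑ i, X i * affinePoly (M i) (c i) + C γ

lemma eval_quadraticPoly (M : Matrix ι ι ℝ) (c : ι → ℝ) (γ : ℝ) (z : ι → ℝ) :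
    eval z (quadraticPoly M c γ) = ∑ i, ∑ j, M i j * z i * z j + ∑ i, c i * z i + γ := by
  simp only [quadraticPoly, affinePoly, map_add, map_sum, map_mul, eval_X, eval_C, mul_add,
    Finset.mul_sum, Finset.sum_add_distrib]
  congr 2
  · exact Fintype.sum_congr _ _ fun i => Fintype.sum_congr _ _ fun j => by ring
  · exact Fintype.sum_congr _ _ fun i => by ring

lemma pderiv_quadraticPoly (M : Matrix ι ι ℝ) (c : ι → ℝ) (γ : ℝ) (i : ι) :
    pderiv i (quadraticPoly M c γ) = affinePoly (M i + fun j => M j i) (c i) := by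
  classical
  simp [quadraticPoly, pderiv_X, Pi.single_apply, affinePoly, mul_add, Finset.sum_add_distrib,
    mul_comm]
  abel

lemma gaussianExpectation_quadraticPoly_mul (M : Matrix ι ι ℝ) (c : ι → ℝ) (γ : ℝ)
    (T : MvPolynomial ι ℝ) :
    gaussianExpectation ι (quadraticPoly M c γ * T)
      = ∑ i, gaussianExpectation ι (pderiv i (affinePoly (M i) (c i) * T))
        + γ * gaussianExpectation ι T := by
  simp [quadraticPoly, add_mul, Finset.sum_mul, mul_assoc, gaussianExpectation_X_mul,
    ← smul_eq_C_mul]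

lemma gaussianExpectation_quadraticPoly (M : Matrix ι ι ℝ) (c : ι → ℝ) (γ : ℝ) :
    gaussianExpectation ι (quadraticPoly M c γ) = M.trace + γ := by
  simpa [pderiv_affinePoly, Matrix.trace] using gaussianExpectation_quadraticPoly_mul M c γ 1

lemma gaussianExpectation_quadraticPoly_sq (M : Matrix ι ι ℝ) (c : ι → ℝ) (γ : ℝ) :
    gaussianExpectation ι (quadraticPoly M c γ ^ 2)
      = ∑ i, ∑ j, M i j * (M i j + M j i) + (M.trace + γ) ^ 2 + ∑ i, c i ^ 2 := by
  rw [sq, gaussianExpectation_quadraticPoly_mul]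
  simp only [pderiv_mul, pderiv_affinePoly, pderiv_quadraticPoly, map_add, ← smul_eq_C_mul,
    map_smul, gaussianExpectation_quadraticPoly, gaussianExpectation_affinePoly_mul_affinePoly,
    smul_eq_mul]
  simp only [Finset.sum_add_distrib, ← Finset.sum_mul, Matrix.trace, Matrix.diag, Pi.add_apply,
    sq]
  ring

end MvPolynomial

end StdGaussian

open MvPolynomial

/-- For `f(x)=⟨Ax,x⟩+⟨a,x⟩+α`, `g(x)=⟨Bx,x⟩+⟨b,x⟩+β` with `A`, `B`
self-adjoint and `Z` standard normal in `ℝⁿ`,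
`E[|f(Z)−g(Z)|²] = 2‖A−B‖²_HS + (tr A − tr B + α − β)² + |a−b|²`. -/
theorem difference_second_moment (n : ℕ) (A B : Matrix (Fin n) (Fin n) ℝ)
    (hA : A.IsSymm) (hB : B.IsSymm) (a b : Fin n → ℝ) (α β : ℝ) :
    (∫ z, (((∑ i, ∑ j, A i j * z i * z j) + (∑ i, a i * z i) + α)
          - ((∑ i, ∑ j, B i j * z i * z j) + (∑ i, b i * z i) + β)) ^ 2
        ∂(Measure.pi fun _ : Fin n => gaussianReal 0 1))
      = 2 * (∑ i, ∑ j, (A i j - B i j) ^ 2)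
        + (A.trace - B.trace + α - β) ^ 2 + ∑ i, (a i - b i) ^ 2 := by
  have hdiff (z : Fin n → ℝ) :
      ((∑ i, ∑ j, A i j * z i * z j) + (∑ i, a i * z i) + α)
          - ((∑ i, ∑ j, B i j * z i * z j) + (∑ i, b i * z i) + β)
        = eval z (quadraticPoly (A - B) (a - b) (α - β)) := by
    simp only [eval_quadraticPoly, Matrix.sub_apply, Pi.sub_apply, sub_mul,
      Finset.sum_sub_distrib]
    ring
  have hsymm (i j : Fin n) : (A - B) j i = (A - B) i j := by
    simp only [Matrix.sub_apply, hA.apply, hB.apply]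
  simp_rw [hdiff, ← map_pow, ← gaussianExpectation_apply, gaussianExpectation_quadraticPoly_sq,
    hsymm, Matrix.trace_sub, Matrix.sub_apply, Pi.sub_apply, ← two_mul, Finset.mul_sum]
  ring_nf
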